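/- arXiv:1807.11183 — 2 statements merged into one kernel-verified Lean document; each statement's English description precedes it below -/
import Mathlib

section
/- Let R be a proper nonempty subset of [n]. The map T ↦ (F_T, (T(R,X))_{X⊆R}), where F_T is the set of edges of T in directions belonging to R, is a bijection from the set of spanning trees of Q_n that reduce over R onto the set of pairs (F, (T^X)_{X⊆R}) such that: (i) T^X is a spanning tree of Q_n(R,X) for every X ⊆ R; (ii) F is a set of edges of Q_n in directions belonging to R on which the map e ↦ π_R(e) is injective; and (iii) {π_R(e) : e ∈ F} is the edge set of a spanning tree of Q_R. -/
open SimpleGraph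

/-- The `n`-cube: vertices are the subsets of `[n]` (modelled as `Finset (Fin n)`),
with an edge between `X` and `Y` iff their symmetric difference is a singleton. -/
def cube (n : ℕ) : SimpleGraph (Finset (Fin n)) where
  Adj X Y := (symmDiff X Y).card = 1
  symm := by
    constructor
    intro X Y h
    rwa [symmDiff_comm]
  loopless := by
    constructor
    intro X h
    simp [symmDiff_self, Finset.bot_eq_empty] at h

/-- `T` is a spanning tree of `G` (both graphs on the same vertex set). -/
def IsSpanningTreeOf {V : Type*} (T G : SimpleGraph V) : Prop :=
  T ≤ G ∧ T.IsTree

/-- The edge `e` of the `n`-cube is in direction `i`. -/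
def edgeInDir {n : ℕ} (i : Fin n) (e : Sym2 (Finset (Fin n))) : Prop :=
  ∃ X : Finset (Fin n), e = s(X, symmDiff X {i})

/-- The number of edges of `T` in direction `i`. -/
noncomputable def dirCount {n : ℕ} (T : SimpleGraph (Finset (Fin n))) (i : Fin n) : ℕ :=
  {e | e ∈ T.edgeSet ∧ edgeInDir i e}.ncard

/-- `a` is the signature of the tree `T`. -/
def HasSig {n : ℕ} (T : SimpleGraph (Finset (Fin n))) (a : Fin n → ℕ) : Prop :=
  ∀ i, dirCount T i = a i

/-- `a` is a signature of `Q_n`, i.e. the signature of some spanning tree of the `n`-cube. -/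
def IsSignature (n : ℕ) (a : Fin n → ℕ) : Prop :=
  ∃ T, IsSpanningTreeOf T (cube n) ∧ HasSig T a

/-- A section of the set of nonempty subsets of `[n]`. -/
def IsSection {n : ℕ} (ψ : Finset (Fin n) → Fin n) : Prop :=
  ∀ X : Finset (Fin n), X.Nonempty → ψ X ∈ X

/-- The number of nonempty subsets on which the section `ψ` takes the value `i`. -/
noncomputable def secCount {n : ℕ} (ψ : Finset (Fin n) → Fin n) (i : Fin n) : ℕ :=
  {X : Finset (Fin n) | X.Nonempty ∧ ψ X = i}.ncard

/-- The tuple `a` reduces over `R` : `Σ_{i ∈ R} a i = 2^|R| - 1`. -/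
def ReducesOver {n : ℕ} (a : Fin n → ℕ) (R : Finset (Fin n)) : Prop :=
  ∑ i ∈ R, a i = 2 ^ R.card - 1

/-- `a` is reducible: it reduces over some proper nonempty subset of `[n]`. -/
def IsReducibleSig {n : ℕ} (a : Fin n → ℕ) : Prop :=
  ∃ R : Finset (Fin n), R.Nonempty ∧ R ≠ Finset.univ ∧ ReducesOver a R

/-- `a` is irreducible. -/
def IsIrreducibleSig {n : ℕ} (a : Fin n → ℕ) : Prop := ¬ IsReducibleSig a

/-- `T` is upright: every vertex `X` is at distance `|X|` in `T` from the root `∅`. -/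
def IsUpright {n : ℕ} (T : SimpleGraph (Finset (Fin n))) : Prop :=
  ∀ X : Finset (Fin n), T.dist X ∅ = X.card

/-- `ψ` is the section associated to the upright tree `T`: for each nonempty `X`,
`ψ X ∈ X` and `X - {ψ X}` is the next vertex after `X` on the path in `T` from `X` to `∅`. -/
def IsTreeSection {n : ℕ} (T : SimpleGraph (Finset (Fin n))) (ψ : Finset (Fin n) → Fin n) : Prop :=
  ∀ X : Finset (Fin n), X.Nonempty → ψ X ∈ X ∧ T.Adj X (X.erase (ψ X))

/-- The minimum of `Σ_{i ∈ K} a i` over the sets `K` of `k` directions. -/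
noncomputable def minSum {n : ℕ} (a : Fin n → ℕ) (k : ℕ) : ℕ :=
  sInf {m : ℕ | ∃ K : Finset (Fin n), K.card = k ∧ ∑ i ∈ K, a i = m}

/-- The excess of `a` at `k`. -/
noncomputable def excess {n : ℕ} (a : Fin n → ℕ) (k : ℕ) : ℤ :=
  (minSum a k : ℤ) - (2 ^ k - 1)

/-- The result of sliding the edge `e` in direction `i`. -/
def slideEdge {n : ℕ} (i : Fin n) (e : Sym2 (Finset (Fin n))) : Sym2 (Finset (Fin n)) :=
  Sym2.map (fun X => symmDiff X {i}) e

/-- The edge `e` of the spanning tree `T` of `Q_n` is `i`-slidable. -/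
def Slidable (n : ℕ) (T : SimpleGraph (Finset (Fin n))) (i : Fin n)
    (e : Sym2 (Finset (Fin n))) : Prop :=
  e ∈ T.edgeSet ∧
    IsSpanningTreeOf (SimpleGraph.fromEdgeSet ((T.edgeSet \ {e}) ∪ {slideEdge i e})) (cube n)

/-- The edge set `E` is (the edge set of) a spanning tree of the subgraph of the
`n`-cube induced on the vertex set `s`. -/
def IsSpanningTreeOn (n : ℕ) (s : Set (Finset (Fin n))) (E : Set (Sym2 (Finset (Fin n)))) : Prop :=
  E ⊆ (cube n).edgeSet ∧ (∀ e ∈ E, ∀ v ∈ e, v ∈ s) ∧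
    ((SimpleGraph.fromEdgeSet E).induce s).IsTree

/-- The edges of `T` with both endpoints in `s`. -/
def edgesWithin {n : ℕ} (s : Set (Finset (Fin n))) (T : SimpleGraph (Finset (Fin n))) :
    Set (Sym2 (Finset (Fin n))) :=
  {e | e ∈ T.edgeSet ∧ ∀ v ∈ e, v ∈ s}

/-- The edge `e` of the tree with edge set `E`, spanning the subgraph of the `n`-cube
induced on `s`, is `i`-slidable. -/
def SlidableOn (n : ℕ) (s : Set (Finset (Fin n))) (E : Set (Sym2 (Finset (Fin n))))
    (i : Fin n) (e : Sym2 (Finset (Fin n))) : Prop :=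
  e ∈ E ∧ IsSpanningTreeOn n s ((E \ {e}) ∪ {slideEdge i e})

/-- The number of edges of `T` in direction `i` with both endpoints in `s`. -/
noncomputable def dirCountOn {n : ℕ} (s : Set (Finset (Fin n)))
    (T : SimpleGraph (Finset (Fin n))) (i : Fin n) : ℕ :=
  {e | e ∈ T.edgeSet ∧ edgeInDir i e ∧ ∀ v ∈ e, v ∈ s}.ncard

/-- `T'` is a spanning tree of the `n`-cube obtained from the spanning tree `T` by a
single edge slide. -/
def SlideStep (n : ℕ) (T T' : SimpleGraph (Finset (Fin n))) : Prop :=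
  IsSpanningTreeOf T (cube n) ∧ IsSpanningTreeOf T' (cube n) ∧
    ∃ (i : Fin n) (e : Sym2 (Finset (Fin n))), e ∈ T.edgeSet ∧
      T' = SimpleGraph.fromEdgeSet ((T.edgeSet \ {e}) ∪ {slideEdge i e})

/-- The trees `T` and `T'` are related by a single edge slide. -/
def SlideAdj (n : ℕ) (T T' : SimpleGraph (Finset (Fin n))) : Prop :=
  T ≠ T' ∧ ∃ (i : Fin n) (e : Sym2 (Finset (Fin n))),
    (e ∈ T.edgeSet ∧ T' = SimpleGraph.fromEdgeSet ((T.edgeSet \ {e}) ∪ {slideEdge i e})) ∨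
    (e ∈ T'.edgeSet ∧ T = SimpleGraph.fromEdgeSet ((T'.edgeSet \ {e}) ∪ {slideEdge i e}))

/-- The spanning trees of the `n`-cube. -/
def SpanningTrees (n : ℕ) := {T : SimpleGraph (Finset (Fin n)) // IsSpanningTreeOf T (cube n)}

/-- The edge slide graph `E(n)` of the `n`-cube. -/
def eslide (n : ℕ) : SimpleGraph (SpanningTrees n) where
  Adj T T' := SlideAdj n T.1 T'.1
  symm := by
    constructor
    rintro T T' ⟨hne, i, e, h⟩
    exact ⟨hne.symm, i, e, h.symm⟩
  loopless := by
    constructor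
    rintro T ⟨hne, -⟩
    exact hne rfl

/-- The projection `π_R(T)` of `T` to `Q_R`: a graph on the subsets of `R`, with `A`
adjacent to `B` iff some edge of `T` projects to `{A, B}`. -/
def projTree (n : ℕ) (R : Finset (Fin n)) (T : SimpleGraph (Finset (Fin n))) :
    SimpleGraph ↥{W : Finset (Fin n) | W ⊆ R} where
  Adj A B := A.1 ≠ B.1 ∧ ∃ U V : Finset (Fin n), T.Adj U V ∧ U ∩ R = A.1 ∧ V ∩ R = B.1
  symm := by
    constructor
    rintro A B ⟨hne, U, V, hUV, hU, hV⟩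
    exact ⟨hne.symm, V, U, hUV.symm, hV, hU⟩
  loopless := by
    constructor
    rintro A ⟨hne, -⟩
    exact hne rfl

/-- The projected edge set `π_R(T)`: images under `π_R` of the edges of `T` in
directions belonging to `R`. -/
def projEdges {n : ℕ} (R : Finset (Fin n)) (T : SimpleGraph (Finset (Fin n))) :
    Set (Sym2 (Finset (Fin n))) :=
  {f | ∃ e ∈ T.edgeSet, (∃ i ∈ R, edgeInDir i e) ∧ f = Sym2.map (· ∩ R) e}

/-- The decomposition `T ↦ (F_T, (T(R,X))_{X ⊆ R})` of a tree reducing over `R`. -/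
def decompose (n : ℕ) (R : Finset (Fin n)) (T : SimpleGraph (Finset (Fin n))) :
    Set (Sym2 (Finset (Fin n))) ×
      ((X : Finset (Fin n)) → X ⊆ R → SimpleGraph ↥{W : Finset (Fin n) | W ∩ R = X}) :=
  ⟨{e | e ∈ T.edgeSet ∧ ∃ i ∈ R, edgeInDir i e},
   fun X _ => T.induce {W : Finset (Fin n) | W ∩ R = X}⟩

/-- `s` is the least index such that `ε_k(a) = 0` for all `s ≤ k ≤ n`; i.e. the
entries of (an ordered) `a` with index `≤ s` form the unsaturated part of `a`. -/
def UnsatIndex (n : ℕ) (a : Fin n → ℕ) (s : ℕ) : Prop :=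
  (∀ k, s ≤ k → k ≤ n → excess a k = 0) ∧
    ∀ s' < s, ¬ (∀ k, s' ≤ k → k ≤ n → excess a k = 0)

/-- The restriction of `a` to its first `s` entries is reducible (as a tuple of length `s`). -/
def ReducibleBelow {n : ℕ} (a : Fin n → ℕ) (s : ℕ) : Prop :=
  ∃ R : Finset (Fin n), R.Nonempty ∧ (∀ i ∈ R, (i : ℕ) < s) ∧ R.card < s ∧
    ∑ i ∈ R, a i = 2 ^ R.card - 1

/-- `a` is strictly reducible: it is reducible and its unsaturated part is reducible. -/
def StrictlyReducible (n : ℕ) (a : Fin n → ℕ) : Prop :=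
  IsReducibleSig a ∧
    ∃ (σ : Equiv.Perm (Fin n)) (s : ℕ), Monotone (a ∘ σ) ∧
      UnsatIndex n (a ∘ σ) s ∧ ReducibleBelow (a ∘ σ) s

/-!
Write `f = π_R` for the projection of vertices onto `Q_R`. Every edge of a subgraph `T` of `Q_n`
either lies in a fibre `Q_n(R,X)` or crosses between two fibres, and only the crossing edges
(`F_T`) survive in the image `f(T)`; hence `|E(T)| = |F_T| + Σ_X |E(T(R,X))|`. A forest on `k`
vertices has at most `k - 1` edges, with equality exactly for trees.

If `T` is a spanning tree with `|F_T| = 2^|R| - 1`, then `f(T)` is connected and has at most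
`2^|R| - 1` edges, so it is a spanning tree of `Q_R` onto which `F_T` maps injectively; the edge
count then leaves every (acyclic) fibre with the maximal number of edges, so each fibre is a tree.
Conversely, gluing fibre trees along `F` gives a connected graph (lift walks of the projected tree
through the connected fibres) with `2^n - 1` edges, hence a tree. A graph is determined by its
crossing edges and its fibres, which gives injectivity.
-/

theorem Nat.card_eq_sum_card_preimage_singleton {V W : Type*} [Finite V] [Fintype W] (f : V → W) :
    Nat.card V = ∑ w, Nat.card (f ⁻¹' {w}) := by
  rw [← Nat.card_sigma]
  exact Nat.card_congr (Equiv.sigmaFiberEquiv f).symm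

namespace SimpleGraph

variable {V W : Type*}

section Acyclic

variable {G : SimpleGraph V}

lemma IsAcyclic.exists_isTree_ge [Nonempty V] (h : G.IsAcyclic) : ∃ T, G ≤ T ∧ T.IsTree := by
  obtain ⟨T, hGT, -, hT⟩ := connected_top.exists_isTree_le_of_le_of_isAcyclic le_top h
  exact ⟨T, hGT, hT⟩

lemma IsAcyclic.card_edgeSet_add_one_le [Finite V] [Nonempty V] (h : G.IsAcyclic) :
    Nat.card G.edgeSet + 1 ≤ Nat.card V := by
  obtain ⟨T, hGT, hT⟩ := h.exists_isTree_ge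
  rw [← (isTree_iff_connected_and_card.mp hT).2]
  exact Nat.add_le_add_right (Nat.card_mono (Set.toFinite _) (edgeSet_mono hGT)) 1

lemma IsAcyclic.isTree_of_card_edgeSet [Finite V] (h : G.IsAcyclic)
    (hcard : Nat.card G.edgeSet + 1 = Nat.card V) : G.IsTree := by
  have : Nonempty V := Nat.card_pos_iff.mp (by omega) |>.1
  obtain ⟨T, hGT, hT⟩ := h.exists_isTree_ge
  have hcardT := (isTree_iff_connected_and_card.mp hT).2
  have hsub : G.edgeSet = T.edgeSet := by
    refine Set.eq_of_subset_of_ncard_le (edgeSet_mono hGT) ?_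
    rw [← Nat.card_coe_set_eq, ← Nat.card_coe_set_eq]
    omega
  exact edgeSet_inj.mp hsub ▸ hT

end Acyclic

section Quotient

variable (f : V → W) (G : SimpleGraph V)

def crossEdges : Set (Sym2 V) := {e | e ∈ G.edgeSet ∧ ¬ (e.map f).IsDiag}

variable {f G}

lemma edgeSet_map_eq_image_crossEdges : (G.map f).edgeSet = Sym2.map f '' G.crossEdges f := by
  ext z
  induction z with
  | _ a b =>
    constructor
    · rintro ⟨hne, u, v, huv, rfl, rfl⟩
      exact ⟨s(u, v), ⟨huv, by simpa using hne⟩, rfl⟩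
    · rintro ⟨e, ⟨he, hdiag⟩, hz⟩
      induction e with
      | _ u v =>
        rw [Sym2.map_mk, Sym2.eq_iff] at hz
        have hne : f u ≠ f v := by simpa using hdiag
        rcases hz with ⟨rfl, rfl⟩ | ⟨rfl, rfl⟩
        · exact map_adj_apply' he hne
        · exact (map_adj_apply' he hne).symm

lemma Reachable.to_map {u v : V} (h : G.Reachable u v) :
    (G.map f).Reachable (f u) (f v) := by
  obtain ⟨p⟩ := h
  induction p with
  | nil => rfl
  | @cons u a v huv _ ih =>
    refine Reachable.trans ?_ ih
    by_cases hf : f u = f a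
    · rw [hf]
    · exact (map_adj_apply' huv hf).reachable

lemma Connected.map_of_surjective (hG : G.Connected) (hf : Function.Surjective f) :
    (G.map f).Connected := by
  have : Nonempty W := hG.nonempty.map f
  refine Connected.mk fun a b => ?_
  obtain ⟨u, rfl⟩ := hf a
  obtain ⟨v, rfl⟩ := hf b
  exact (hG.preconnected u v).to_map

lemma reachable_of_map_reachable (hfib : ∀ w, (G.induce (f ⁻¹' {w})).Connected) {u v : V}
    (h : (G.map f).Reachable (f u) (f v)) : G.Reachable u v := by
  have hsame : ∀ {u v}, f u = f v → G.Reachable u v := fun {u v} huv =>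
    ((hfib (f u)).preconnected ⟨u, rfl⟩ ⟨v, huv.symm⟩).map (Embedding.induce _).toHom
  suffices ∀ {a b} (p : (G.map f).Walk a b) (u v : V), f u = a → f v = b → G.Reachable u v
    from this h.some u v rfl rfl
  intro a b p
  induction p with
  | nil => exact fun u v hu hv => hsame (hu.trans hv.symm)
  | cons hadj _ ih =>
    obtain ⟨-, u', v', huv', rfl, rfl⟩ := hadj
    exact fun u v hu hv => (hsame hu).trans (huv'.reachable.trans (ih v' v rfl hv))

lemma Connected.of_map (hmap : (G.map f).Connected)
    (hfib : ∀ w, (G.induce (f ⁻¹' {w})).Connected) : G.Connected := by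
  obtain ⟨w⟩ := hmap.nonempty
  have : Nonempty V := (hfib w).nonempty.map Subtype.val
  exact Connected.mk fun u v => reachable_of_map_reachable hfib (hmap.preconnected _ _)

lemma image_val_edgeSet_induce (s : Set V) :
    Sym2.map Subtype.val '' (G.induce s).edgeSet =
      {e | e ∈ G.edgeSet ∧ ∀ v ∈ e, v ∈ s} := by
  ext e
  induction e with
  | _ a b =>
    constructor
    · rintro ⟨e', he', hz⟩
      induction e' with
      | _ u v =>
        rw [Sym2.map_mk, Sym2.eq_iff] at hz
        rcases hz with ⟨rfl, rfl⟩ | ⟨rfl, rfl⟩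
        · exact ⟨he', by simp⟩
        · exact ⟨G.adj_symm he', by simp⟩
    · rintro ⟨hab, hs⟩
      exact ⟨s(⟨a, hs a (Sym2.mem_mk_left a b)⟩, ⟨b, hs b (Sym2.mem_mk_right a b)⟩), hab,
        rfl⟩

lemma eq_of_crossEdges_eq_of_induce_eq {G₁ G₂ : SimpleGraph V}
    (hC : G₁.crossEdges f = G₂.crossEdges f)
    (hfib : ∀ w, G₁.induce (f ⁻¹' {w}) = G₂.induce (f ⁻¹' {w})) : G₁ = G₂ := by
  ext a b
  by_cases hab : f a = f b
  · have h := congrArg (fun H => H.Adj ⟨a, rfl⟩ ⟨b, hab.symm⟩) (hfib (f a))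
    simpa using h
  · simpa [crossEdges, hab] using congrArg (s(a, b) ∈ ·) hC

end Quotient

section Finite

variable {f : V → W} {G : SimpleGraph V} [Finite V] [Fintype W]

lemma card_edgeSet_eq_ncard_crossEdges_add_sum :
    Nat.card G.edgeSet =
      (G.crossEdges f).ncard + ∑ w, Nat.card (G.induce (f ⁻¹' {w})).edgeSet := by
  set fibreEdges : W → Set (Sym2 V) := fun w => {e | e ∈ G.edgeSet ∧ ∀ v ∈ e, f v = w}
  have hsplit : G.edgeSet = G.crossEdges f ∪ ⋃ w, fibreEdges w := by
    ext e
    induction e with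
    | _ a b =>
      simp only [Set.mem_union, Set.mem_iUnion]
      constructor
      · intro he
        by_cases hab : f a = f b
        · refine Or.inr ⟨f a, he, fun v hv => ?_⟩
          rcases Sym2.mem_iff.mp hv with rfl | rfl <;> simp [hab]
        · exact Or.inl ⟨he, by simpa using hab⟩
      · rintro (⟨he, -⟩ | ⟨w, he, -⟩) <;> exact he
  have hdisj : Disjoint (G.crossEdges f) (⋃ w, fibreEdges w) := by
    refine Set.disjoint_left.mpr fun e ⟨_, hdiag⟩ he => hdiag ?_
    obtain ⟨w, -, hw⟩ := Set.mem_iUnion.mp he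
    induction e with
    | _ a b => simpa using (hw a (Sym2.mem_mk_left a b)).trans (hw b (Sym2.mem_mk_right a b)).symm
  have hpair : Pairwise (Function.onFun Disjoint fibreEdges) := by
    intro w w' hne
    refine Set.disjoint_left.mpr fun e ⟨_, hw⟩ ⟨_, hw'⟩ => hne ?_
    induction e with
    | _ a b => exact (hw a (Sym2.mem_mk_left a b)).symm.trans (hw' a (Sym2.mem_mk_left a b))
  rw [Nat.card_coe_set_eq, hsplit, Set.ncard_union_eq hdisj (Set.toFinite _) (Set.toFinite _),
    Set.ncard_iUnion_of_finite (fun _ => Set.toFinite _) hpair, finsum_eq_sum_of_fintype]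
  congr 1
  refine Finset.sum_congr rfl fun w _ => ?_
  rw [Nat.card_coe_set_eq, ← Set.ncard_image_of_injective (G.induce (f ⁻¹' {w})).edgeSet
    (Sym2.map.injective Subtype.val_injective), image_val_edgeSet_induce]
  rfl

theorem IsTree.isTree_map_and_injOn_crossEdges (hG : G.IsTree) (hf : Function.Surjective f)
    (hC : (G.crossEdges f).ncard + 1 = Nat.card W) :
    (G.map f).IsTree ∧ Set.InjOn (Sym2.map f) (G.crossEdges f) := by
  have hconn := hG.connected.map_of_surjective hf
  have hle : Nat.card (G.map f).edgeSet ≤ (G.crossEdges f).ncard := by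
    rw [Nat.card_coe_set_eq, edgeSet_map_eq_image_crossEdges]
    exact Set.ncard_image_le
  have hge := hconn.card_vert_le_card_edgeSet_add_one
  refine ⟨isTree_iff_connected_and_card.mpr ⟨hconn, by omega⟩,
    Set.injOn_of_ncard_image_eq ?_⟩
  rw [← edgeSet_map_eq_image_crossEdges, ← Nat.card_coe_set_eq]
  omega

theorem IsTree.isTree_induce_preimage (hG : G.IsTree) (hf : Function.Surjective f)
    (hC : (G.crossEdges f).ncard + 1 = Nat.card W) (w : W) :
    (G.induce (f ⁻¹' {w})).IsTree := by
  have hacyc : ∀ w, (G.induce (f ⁻¹' {w})).IsAcyclic := fun w => hG.isAcyclic.induce _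
  have hle : ∀ w ∈ Finset.univ,
      Nat.card (G.induce (f ⁻¹' {w})).edgeSet + 1 ≤ Nat.card (f ⁻¹' {w}) := fun w _ => by
    have : Nonempty (f ⁻¹' {w}) := let ⟨v, hv⟩ := hf w; ⟨⟨v, hv⟩⟩
    exact (hacyc w).card_edgeSet_add_one_le
  have hsum :
      ∑ w, (Nat.card (G.induce (f ⁻¹' {w})).edgeSet + 1) = ∑ w, Nat.card (f ⁻¹' {w}) := by
    have hcount := G.card_edgeSet_eq_ncard_crossEdges_add_sum (f := f)
    have htree := (isTree_iff_connected_and_card.mp hG).2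
    rw [Finset.sum_add_distrib, ← Nat.card_eq_sum_card_preimage_singleton, Finset.sum_const,
      Finset.card_univ, smul_eq_mul, mul_one, ← Nat.card_eq_fintype_card]
    omega
  exact (hacyc w).isTree_of_card_edgeSet
    ((Finset.sum_eq_sum_iff_of_le hle).mp hsum w (Finset.mem_univ w))

theorem isTree_of_isTree_induce_preimage (hfib : ∀ w, (G.induce (f ⁻¹' {w})).IsTree)
    (hinj : Set.InjOn (Sym2.map f) (G.crossEdges f)) (hmap : (G.map f).IsTree) :
    G.IsTree ∧ (G.crossEdges f).ncard + 1 = Nat.card W := by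
  have hC : (G.crossEdges f).ncard + 1 = Nat.card W := by
    rw [← hinj.ncard_image, ← edgeSet_map_eq_image_crossEdges, ← Nat.card_coe_set_eq]
    exact (isTree_iff_connected_and_card.mp hmap).2
  have hfibcard : ∑ w, (Nat.card (G.induce (f ⁻¹' {w})).edgeSet + 1) = Nat.card V := by
    rw [Nat.card_eq_sum_card_preimage_singleton f]
    exact Finset.sum_congr rfl fun w _ => (isTree_iff_connected_and_card.mp (hfib w)).2
  have hcount := G.card_edgeSet_eq_ncard_crossEdges_add_sum (f := f)
  rw [Finset.sum_add_distrib, Finset.sum_const, Finset.card_univ, smul_eq_mul, mul_one,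
    ← Nat.card_eq_fintype_card] at hfibcard
  refine ⟨isTree_iff_connected_and_card.mpr ⟨hmap.connected.of_map ?_, by omega⟩, hC⟩
  exact fun w => (hfib w).connected

theorem isTree_and_ncard_crossEdges_iff (hf : Function.Surjective f) :
    G.IsTree ∧ (G.crossEdges f).ncard + 1 = Nat.card W ↔
      (∀ w, (G.induce (f ⁻¹' {w})).IsTree) ∧ Set.InjOn (Sym2.map f) (G.crossEdges f) ∧
        (G.map f).IsTree := by
  refine ⟨fun ⟨hG, hC⟩ => ?_,
    fun ⟨hfib, hinj, hmap⟩ => isTree_of_isTree_induce_preimage hfib hinj hmap⟩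
  obtain ⟨hmap, hinj⟩ := hG.isTree_map_and_injOn_crossEdges hf hC
  exact ⟨hG.isTree_induce_preimage hf hC, hinj, hmap⟩

end Finite

section Glue

variable {ι : Type*} {s : ι → Set V}

def glue (F : Set (Sym2 V)) (t : ∀ i, SimpleGraph (s i)) : SimpleGraph V :=
  fromEdgeSet F ⊔ ⨆ i, (t i).map (Function.Embedding.subtype (· ∈ s i))

variable {F : Set (Sym2 V)} {t : ∀ i, SimpleGraph (s i)}

lemma glue_adj {a b : V} :
    (glue F t).Adj a b ↔
      (s(a, b) ∈ F ∧ a ≠ b) ∨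
        ∃ i, ∃ (ha : a ∈ s i) (hb : b ∈ s i), (t i).Adj ⟨a, ha⟩ ⟨b, hb⟩ := by
  simp only [glue, sup_adj, fromEdgeSet_adj, iSup_adj, map_adj, Subtype.exists,
    Function.Embedding.subtype_apply, exists_and_right]
  refine or_congr_right ⟨?_, ?_⟩
  · rintro ⟨i, a, ha, b, ⟨hb, h⟩, rfl, rfl⟩
    exact ⟨i, ha, hb, h⟩
  · rintro ⟨i, ha, hb, h⟩
    exact ⟨i, a, ha, b, ⟨hb, h⟩, rfl, rfl⟩

lemma induce_glue (hs : Pairwise (Function.onFun Disjoint s))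
    (hF : ∀ i, ∀ a ∈ s i, ∀ b ∈ s i, s(a, b) ∉ F) (i : ι) :
    (glue F t).induce (s i) = t i := by
  ext ⟨a, ha⟩ ⟨b, hb⟩
  rw [induce_adj, glue_adj]
  constructor
  · rintro (⟨hab, -⟩ | ⟨j, ha', hb', h⟩)
    · exact absurd hab (hF i a ha b hb)
    · obtain rfl : j = i := by
        by_contra hne
        exact Set.disjoint_left.mp (hs hne) ha' ha
      exact h
  · exact fun h => Or.inr ⟨i, ha, hb, h⟩

lemma glue_le {G : SimpleGraph V} (hF : F ⊆ G.edgeSet) (ht : ∀ i, t i ≤ G.induce (s i)) :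
    glue F t ≤ G := by
  intro a b h
  rcases glue_adj.mp h with ⟨hab, -⟩ | ⟨i, ha, hb, h⟩
  · exact hF hab
  · exact ht i h

lemma crossEdges_glue {f : V → W} (hF : ∀ e ∈ F, ¬ (e.map f).IsDiag)
    (hs : ∀ i, ∀ a ∈ s i, ∀ b ∈ s i, f a = f b) : (glue F t).crossEdges f = F := by
  ext e
  induction e with
  | _ a b =>
    constructor
    · rintro ⟨h, hdiag⟩
      rcases glue_adj.mp h with ⟨hab, -⟩ | ⟨i, ha, hb, -⟩
      · exact hab
      · exact absurd (hs i a ha b hb) (by simpa using hdiag)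
    · intro hab
      have hne : f a ≠ f b := by simpa using hF _ hab
      exact ⟨glue_adj.mpr (Or.inl ⟨hab, fun h => hne (congrArg f h)⟩), by simpa using hne⟩

end Glue

end SimpleGraph

section Cube

variable {n : ℕ}

lemma cube_adj_iff {U V : Finset (Fin n)} : (cube n).Adj U V ↔ ∃ i, symmDiff U V = {i} := by
  simp [cube, Finset.card_eq_one]

lemma edgeInDir_mk_iff {i : Fin n} {U V : Finset (Fin n)} :
    edgeInDir i s(U, V) ↔ symmDiff U V = {i} := by
  constructor
  · rintro ⟨X, hX⟩
    rcases Sym2.eq_iff.mp hX with ⟨rfl, rfl⟩ | ⟨rfl, rfl⟩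
    · exact symmDiff_symmDiff_cancel_left _ _
    · rw [symmDiff_comm]
      exact symmDiff_symmDiff_cancel_left _ _
  · intro h
    exact ⟨U, by rw [← h, symmDiff_symmDiff_cancel_left]⟩

lemma edgeInDir_unique {i j : Fin n} {e : Sym2 (Finset (Fin n))} (hi : edgeInDir i e)
    (hj : edgeInDir j e) : i = j := by
  induction e with
  | _ U V =>
    rw [edgeInDir_mk_iff] at hi hj
    exact Finset.singleton_injective (hi.symm.trans hj)

lemma sum_dirCount (T : SimpleGraph (Finset (Fin n))) (R : Finset (Fin n)) :
    ∑ i ∈ R, dirCount T i = {e | e ∈ T.edgeSet ∧ ∃ i ∈ R, edgeInDir i e}.ncard := by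
  have hunion : {e | e ∈ T.edgeSet ∧ ∃ i ∈ R, edgeInDir i e} =
      ⋃ i ∈ (R : Set (Fin n)), {e | e ∈ T.edgeSet ∧ edgeInDir i e} := by
    ext e
    simp only [Set.mem_ofPred_eq, Set.mem_iUnion, Finset.mem_coe, exists_prop]
    constructor
    · rintro ⟨he, i, hi, hd⟩
      exact ⟨i, hi, he, hd⟩
    · rintro ⟨i, hi, he, hd⟩
      exact ⟨he, i, hi, hd⟩
  have hdisj :
      (R : Set (Fin n)).PairwiseDisjoint fun i => {e | e ∈ T.edgeSet ∧ edgeInDir i e} :=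
    fun i _ j _ hij =>
      Set.disjoint_left.mpr fun _ ⟨_, hi⟩ ⟨_, hj⟩ => hij (edgeInDir_unique hi hj)
  rw [hunion, R.finite_toSet.ncard_biUnion (fun _ _ => Set.toFinite _) hdisj,
    finsum_mem_coe_finset]
  rfl

lemma symmDiff_inter_inter (U V R : Finset (Fin n)) :
    symmDiff (U ∩ R) (V ∩ R) = symmDiff U V ∩ R := by
  ext x
  simp only [Finset.mem_symmDiff, Finset.mem_inter]
  tauto

lemma inter_eq_inter_iff_of_symmDiff_eq {R U V : Finset (Fin n)} {i : Fin n}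
    (h : symmDiff U V = {i}) : U ∩ R = V ∩ R ↔ i ∉ R := by
  rw [← symmDiff_eq_bot, symmDiff_inter_inter, h, Finset.bot_eq_empty,
    ← Finset.disjoint_iff_inter_eq_empty, Finset.disjoint_singleton_left]

/-- `π_R` on vertices, with values in the vertex type of `Q_R`. -/
def cubeProj (R U : Finset (Fin n)) : ↥{W : Finset (Fin n) | W ⊆ R} :=
  ⟨U ∩ R, Finset.inter_subset_right⟩

variable {R : Finset (Fin n)}

lemma cubeProj_surjective : Function.Surjective (cubeProj R) :=
  fun A => ⟨A.1, Subtype.ext (Finset.inter_eq_left.mpr A.2)⟩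

lemma preimage_cubeProj_singleton {X : Finset (Fin n)} (hX : X ⊆ R) :
    cubeProj R ⁻¹' {⟨X, hX⟩} = {W | W ∩ R = X} := by
  ext W
  simp [cubeProj, Subtype.ext_iff]

lemma card_subsets : Nat.card ↥{W : Finset (Fin n) | W ⊆ R} = 2 ^ R.card := by
  have h : {W : Finset (Fin n) | W ⊆ R} = ↑R.powerset := by
    ext W
    simp
  rw [Nat.card_coe_set_eq, h, Set.ncard_coe_finset, Finset.card_powerset]

lemma exists_edgeInDir_mem_iff_not_isDiag {e : Sym2 (Finset (Fin n))}
    (he : e ∈ (cube n).edgeSet) :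
    (∃ i ∈ R, edgeInDir i e) ↔ ¬ (e.map (cubeProj R)).IsDiag := by
  induction e with
  | _ U V =>
    obtain ⟨j, hj⟩ := cube_adj_iff.mp he
    simp only [edgeInDir_mk_iff, hj, Finset.singleton_inj, exists_eq_right', Sym2.map_mk,
      Sym2.mk_isDiag_iff, cubeProj, Subtype.mk.injEq, inter_eq_inter_iff_of_symmDiff_eq hj,
      not_not]

variable {T : SimpleGraph (Finset (Fin n))}

lemma crossEdges_cubeProj (hT : T ≤ cube n) :
    T.crossEdges (cubeProj R) = {e | e ∈ T.edgeSet ∧ ∃ i ∈ R, edgeInDir i e} := by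
  ext e
  exact and_congr_right fun he => (exists_edgeInDir_mem_iff_not_isDiag (edgeSet_mono hT he)).symm

lemma reducesOver_iff (hT : T ≤ cube n) :
    ReducesOver (fun i => dirCount T i) R ↔
      (T.crossEdges (cubeProj R)).ncard + 1 = Nat.card ↥{W : Finset (Fin n) | W ⊆ R} := by
  rw [ReducesOver, sum_dirCount, crossEdges_cubeProj hT, card_subsets]
  have := Nat.one_le_two_pow (n := R.card)
  omega

lemma map_cubeProj_le (hT : T ≤ cube n) :
    T.map (cubeProj R) ≤ (cube n).induce {W : Finset (Fin n) | W ⊆ R} := by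
  rintro _ _ ⟨hne, U, V, hUV, rfl, rfl⟩
  obtain ⟨j, hj⟩ := cube_adj_iff.mp (hT hUV)
  have hjR : j ∈ R := by
    by_contra hjR
    exact hne (Subtype.ext ((inter_eq_inter_iff_of_symmDiff_eq hj).mpr hjR))
  show (cube n).Adj (U ∩ R) (V ∩ R)
  exact cube_adj_iff.mpr
    ⟨j, by rw [symmDiff_inter_inter, hj, Finset.singleton_inter_of_mem hjR]⟩

lemma image_val_edgeSet_map_cubeProj :
    Sym2.map Subtype.val '' (T.map (cubeProj R)).edgeSet =
      Sym2.map (· ∩ R) '' T.crossEdges (cubeProj R) := by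
  rw [edgeSet_map_eq_image_crossEdges, Set.image_image]
  simp_rw [Sym2.map_map]
  rfl

lemma injOn_map_inter_iff {s : Set (Sym2 (Finset (Fin n)))} :
    Set.InjOn (Sym2.map (· ∩ R)) s ↔ Set.InjOn (Sym2.map (cubeProj R)) s := by
  have h : Sym2.map (· ∩ R) = Sym2.map Subtype.val ∘ Sym2.map (cubeProj R) :=
    funext fun e => (Sym2.map_map (f := cubeProj R) (g := Subtype.val) e).symm
  rw [h]
  exact ⟨Set.InjOn.of_comp, (Sym2.map.injective Subtype.val_injective).comp_injOn⟩

end Cube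

section Decomposition

variable {n : ℕ} {R : Finset (Fin n)}

/-- The pairs `(F, (T^X)_{X ⊆ R})` satisfying conditions (i)–(iii). -/
def IsDecompositionData (n : ℕ) (R : Finset (Fin n))
    (p : Set (Sym2 (Finset (Fin n))) ×
      ((X : Finset (Fin n)) → X ⊆ R → SimpleGraph ↥{W : Finset (Fin n) | W ∩ R = X})) :
    Prop :=
  (∀ (X : Finset (Fin n)) (hX : X ⊆ R),
      IsSpanningTreeOf (p.2 X hX) ((cube n).induce {W : Finset (Fin n) | W ∩ R = X})) ∧
    (∀ e ∈ p.1, e ∈ (cube n).edgeSet ∧ ∃ i ∈ R, edgeInDir i e) ∧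
    Set.InjOn (Sym2.map (· ∩ R)) p.1 ∧
    ∃ TR : SimpleGraph ↥{W : Finset (Fin n) | W ⊆ R},
      IsSpanningTreeOf TR ((cube n).induce {W : Finset (Fin n) | W ⊆ R}) ∧
      Sym2.map Subtype.val '' TR.edgeSet = Sym2.map (· ∩ R) '' p.1

theorem decompose_mapsTo :
    Set.MapsTo (decompose n R)
      {T | IsSpanningTreeOf T (cube n) ∧ ReducesOver (fun i => dirCount T i) R}
      {p | IsDecompositionData n R p} := by
  rintro T ⟨⟨hle, htree⟩, hred⟩
  obtain ⟨hfib, hinj, hmap⟩ := (isTree_and_ncard_crossEdges_iff cubeProj_surjective).mp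
    ⟨htree, (reducesOver_iff hle).mp hred⟩
  have hcross := crossEdges_cubeProj (R := R) hle
  refine ⟨fun X hX => ⟨fun _ _ h => hle h, ?_⟩, fun e he => ⟨edgeSet_mono hle he.1, he.2⟩,
    ?_, T.map (cubeProj R), ⟨map_cubeProj_le hle, hmap⟩, ?_⟩
  · have h := hfib ⟨X, hX⟩
    rw [preimage_cubeProj_singleton hX] at h
    exact h
  · simpa only [decompose, ← hcross, injOn_map_inter_iff] using hinj
  · rw [image_val_edgeSet_map_cubeProj, hcross]
    rfl

theorem decompose_injOn :
    Set.InjOn (decompose n R)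
      {T | IsSpanningTreeOf T (cube n) ∧ ReducesOver (fun i => dirCount T i) R} := by
  rintro T₁ ⟨⟨hle₁, -⟩, -⟩ T₂ ⟨⟨hle₂, -⟩, -⟩ heq
  refine eq_of_crossEdges_eq_of_induce_eq (f := cubeProj R) ?_ fun ⟨X, hX⟩ => ?_
  · rw [crossEdges_cubeProj hle₁, crossEdges_cubeProj hle₂]
    exact congrArg Prod.fst heq
  · rw [preimage_cubeProj_singleton hX]
    exact congrFun (congrFun (congrArg Prod.snd heq) X) hX

theorem decompose_surjOn :
    Set.SurjOn (decompose n R)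
      {T | IsSpanningTreeOf T (cube n) ∧ ReducesOver (fun i => dirCount T i) R}
      {p | IsDecompositionData n R p} := by
  rintro ⟨F, t⟩ ⟨hfib, hF, hinj, TR, ⟨_, hTR⟩, hTRim⟩
  let part : ↥{X : Finset (Fin n) | X ⊆ R} → Set (Finset (Fin n)) :=
    fun X => {W | W ∩ R = X.1}
  let T := glue F (s := part) fun X => t X.1 X.2
  have hFcross : ∀ e ∈ F, ¬ (e.map (cubeProj R)).IsDiag := fun e he =>
    (exists_edgeInDir_mem_iff_not_isDiag (hF e he).1).mp (hF e he).2
  have hpart : ∀ X, ∀ a ∈ part X, ∀ b ∈ part X, cubeProj R a = cubeProj R b :=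
    fun X a ha b hb => Subtype.ext (ha.trans hb.symm)
  have hdisj : Pairwise (Function.onFun Disjoint part) := fun X Y hXY =>
    Set.disjoint_left.mpr fun _ (hX : _ = X.1) (hY : _ = Y.1) =>
      hXY (Subtype.ext (hX.symm.trans hY))
  have hind : ∀ X hX, T.induce {W | W ∩ R = X} = t X hX := fun X hX =>
    induce_glue hdisj (fun X a ha b hb hab => hFcross _ hab (by simpa using hpart X a ha b hb))
      ⟨X, hX⟩
  have hle : T ≤ cube n := glue_le (fun e he => (hF e he).1) fun X => (hfib X.1 X.2).1
  have hcross : T.crossEdges (cubeProj R) = F := crossEdges_glue hFcross hpart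
  have hmap : T.map (cubeProj R) = TR := by
    rw [← edgeSet_inj]
    refine Set.image_injective.mpr (Sym2.map.injective Subtype.val_injective) ?_
    rw [image_val_edgeSet_map_cubeProj, hcross, hTRim]
  obtain ⟨htree, hC⟩ := (isTree_and_ncard_crossEdges_iff (G := T) cubeProj_surjective).mpr
    ⟨fun ⟨X, hX⟩ => by
      rw [preimage_cubeProj_singleton hX, hind]
      exact (hfib X hX).2,
      hcross ▸ injOn_map_inter_iff.mp hinj, hmap ▸ hTR⟩
  refine ⟨T, ⟨⟨hle, htree⟩, (reducesOver_iff hle).mpr hC⟩, Prod.ext ?_ (funext₂ hind)⟩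
  exact (crossEdges_cubeProj hle).symm.trans hcross

end Decomposition

theorem stmt11_general (n : ℕ) (R : Finset (Fin n)) :
    Set.BijOn (decompose n R)
      {T | IsSpanningTreeOf T (cube n) ∧ ReducesOver (fun i => dirCount T i) R}
      {p | (∀ (X : Finset (Fin n)) (hX : X ⊆ R),
              IsSpanningTreeOf (p.2 X hX)
                ((cube n).induce {W : Finset (Fin n) | W ∩ R = X})) ∧
           (∀ e ∈ p.1, e ∈ (cube n).edgeSet ∧ ∃ i ∈ R, edgeInDir i e) ∧
           Set.InjOn (Sym2.map (· ∩ R)) p.1 ∧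
           (∃ TR : SimpleGraph ↥{W : Finset (Fin n) | W ⊆ R},
              IsSpanningTreeOf TR ((cube n).induce {W : Finset (Fin n) | W ⊆ R}) ∧
              Sym2.map (Subtype.val) '' TR.edgeSet = Sym2.map (· ∩ R) '' p.1)} :=
  ⟨decompose_mapsTo, decompose_injOn, decompose_surjOn⟩

/-- Theorem: decomposition of trees reducing over `R` is a bijection.
`T ↦ (F_T, (T(R,X))_{X ⊆ R})` is a bijection from the spanning trees of `Q_n` reducing
over `R` onto the pairs `(F, (T^X))` such that each `T^X` is a spanning tree of
`Q_n(R,X)`, `F` consists of edges of `Q_n` in directions in `R` on which `π_R` is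
injective, and `π_R(F)` is the edge set of a spanning tree of `Q_R`. -/
theorem stmt11 (n : ℕ) (R : Finset (Fin n)) (hR1 : R.Nonempty) (hR2 : R ≠ Finset.univ) :
    Set.BijOn (decompose n R)
      {T | IsSpanningTreeOf T (cube n) ∧ ReducesOver (fun i => dirCount T i) R}
      {p | (∀ (X : Finset (Fin n)) (hX : X ⊆ R),
              IsSpanningTreeOf (p.2 X hX)
                ((cube n).induce {W : Finset (Fin n) | W ∩ R = X})) ∧
           (∀ e ∈ p.1, e ∈ (cube n).edgeSet ∧ ∃ i ∈ R, edgeInDir i e) ∧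
           Set.InjOn (Sym2.map (· ∩ R)) p.1 ∧
           (∃ TR : SimpleGraph ↥{W : Finset (Fin n) | W ⊆ R},
              IsSpanningTreeOf TR ((cube n).induce {W : Finset (Fin n) | W ⊆ R}) ∧
              Sym2.map (Subtype.val) '' TR.edgeSet = Sym2.map (· ∩ R) '' p.1)} :=
  stmt11_general n R
end

section
/- Let R be a proper nonempty subset of [n] and let T be a spanning tree of Q_n that reduces over R. If T' is a spanning tree of Q_n obtained from T by a finite sequence of edge slides, then for every X ⊆ R the signature of T'(R,X) equals the signature of T(R,X); that is, for every direction i ∈ [n] − R, the number of edges of T'(R,X) in direction i equals the number of edges of T(R,X) in direction i. -/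
open SimpleGraph

/-!
Sliding an edge replaces it by a parallel edge, so slides preserve the signature, and with it the
reduction over `R`. In a tree that reduces over `R`, exactly `2^|R| - 1` edges run between the
`2^|R|` fibers `Q_n(R, X)`, so every fiber is spanned by a subtree. Hence an edge in a direction
outside `R` can never slide into another fiber: the fiber it leaves would no longer be spanned.
So every slide either keeps the slid edge in its fiber and its direction, or touches no edge
inside a fiber.
-/

namespace Set

variable {α : Type*}

theorem ncard_biUnion_finset [Finite α] {ι : Type*} {t : Finset ι} {s : ι → Set α}
    (h : (t : Set ι).PairwiseDisjoint s) : (⋃ i ∈ t, s i).ncard = ∑ i ∈ t, (s i).ncard := by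
  rw [← finsum_mem_coe_finset, ← t.finite_toSet.ncard_biUnion (fun _ _ ↦ toFinite _) h]
  simp only [Finset.mem_coe]

theorem ncard_sep_insert_sdiff_of_iff {E : Set α} {e f : α} {P : α → Prop} (he : e ∈ E)
    (hf : f ∉ E) (hP : P e ↔ P f) :
    {g ∈ insert f (E \ {e}) | P g}.ncard = {g ∈ E | P g}.ncard := by
  by_cases hPe : P e
  · have hsep : {g ∈ insert f (E \ {e}) | P g} = insert f ({g ∈ E | P g} \ {e}) := by
      ext g
      simp only [mem_sep_iff, mem_insert_iff, mem_sdiff, mem_singleton_iff]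
      grind
    rw [hsep, ncard_exchange (fun h ↦ hf (mem_sep_iff.mp h).1) (mem_sep he hPe)]
  · congr 1
    ext g
    simp only [mem_sep_iff, mem_insert_iff, mem_sdiff, mem_singleton_iff]
    grind

theorem ncard_sep_insert_sdiff_add_one {E : Set α} {e f : α} {P : α → Prop} (hE : E.Finite)
    (he : e ∈ E) (hPe : P e) (hPf : ¬ P f) :
    {g ∈ insert f (E \ {e}) | P g}.ncard + 1 = {g ∈ E | P g}.ncard := by
  have hsep : {g ∈ insert f (E \ {e}) | P g} = {g ∈ E | P g} \ {e} := by
    ext g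
    simp only [mem_sep_iff, mem_insert_iff, mem_sdiff, mem_singleton_iff]
    grind
  rw [hsep, ncard_sdiff_singleton_add_one (mem_sep he hPe) (hE.sep _)]

end Set

namespace SimpleGraph

variable {V : Type*} {G : SimpleGraph V}

theorem IsTree.ncard_edgeSet_add_one [Finite V] (hG : G.IsTree) :
    G.edgeSet.ncard + 1 = Nat.card V := by
  rw [← Nat.card_coe_set_eq, (isTree_iff_connected_and_card.mp hG).2]

theorem IsAcyclic.ncard_edgeSet_add_one_le [Finite V] [Nonempty V] (hG : G.IsAcyclic) :
    G.edgeSet.ncard + 1 ≤ Nat.card V := by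
  obtain ⟨F, hGF, -, hF⟩ := connected_top.exists_isTree_le_of_le_of_isAcyclic le_top hG
  rw [← hF.ncard_edgeSet_add_one]
  exact Nat.add_le_add_right (Set.ncard_le_ncard (edgeSet_mono hGF) (Set.toFinite _)) 1

theorem IsAcyclic.ncard_edgesWithin_add_one_le [Finite V] (hG : G.IsAcyclic) {s : Set V}
    (hs : s.Nonempty) : {e ∈ G.edgeSet | ∀ v ∈ e, v ∈ s}.ncard + 1 ≤ s.ncard := by
  have : Nonempty s := hs.to_subtype
  have hsub : {e ∈ G.edgeSet | ∀ v ∈ e, v ∈ s} ⊆ Sym2.map Subtype.val '' (G.induce s).edgeSet := by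
    rintro e ⟨he, hes⟩
    induction e using Sym2.ind with
    | h u v =>
      exact ⟨s(⟨u, hes u (Sym2.mem_mk_left u v)⟩, ⟨v, hes v (Sym2.mem_mk_right u v)⟩), he, rfl⟩
  calc _ ≤ (Sym2.map Subtype.val '' (G.induce s).edgeSet).ncard + 1 := by
        gcongr
        exact Set.toFinite _
    _ ≤ (G.induce s).edgeSet.ncard + 1 := by
        gcongr
        exact Set.ncard_image_le (Set.toFinite _)
    _ ≤ Nat.card s := (hG.induce s).ncard_edgeSet_add_one_le
    _ = s.ncard := Nat.card_coe_set_eq s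

theorem IsTree.ncard_edgesWithin_add_one_eq [Finite V] (hG : G.IsTree) {ι : Type*}
    {t : Finset ι} {P : ι → Set V} (hdisj : (t : Set ι).PairwiseDisjoint P)
    (hcover : ∀ v, ∃ b ∈ t, v ∈ P b) (hne : ∀ b ∈ t, (P b).Nonempty)
    (hcross : (G.edgeSet \ ⋃ b ∈ t, {e ∈ G.edgeSet | ∀ v ∈ e, v ∈ P b}).ncard + 1 = t.card) :
    ∀ b ∈ t, {e ∈ G.edgeSet | ∀ v ∈ e, v ∈ P b}.ncard + 1 = (P b).ncard := by
  set W := fun b ↦ {e ∈ G.edgeSet | ∀ v ∈ e, v ∈ P b}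
  change (G.edgeSet \ ⋃ b ∈ t, W b).ncard + 1 = t.card at hcross
  have hWdisj : (t : Set ι).PairwiseDisjoint W := by
    intro b hb c hc hbc
    refine Set.disjoint_left.mpr fun e ⟨_, heb⟩ ⟨_, hec⟩ ↦ ?_
    have hv := e.out_fst_mem
    exact Set.disjoint_left.mp (hdisj hb hc hbc) (heb _ hv) (hec _ hv)
  have hvert : G.edgeSet.ncard + 1 = ∑ b ∈ t, (P b).ncard := by
    have hunion : ⋃ b ∈ t, P b = Set.univ :=
      Set.eq_univ_of_forall fun v ↦ by
        obtain ⟨b, hb, hv⟩ := hcover v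
        exact Set.mem_biUnion hb hv
    rw [← Set.ncard_biUnion_finset hdisj, hunion, Set.ncard_univ, hG.ncard_edgeSet_add_one]
  have hedges : G.edgeSet.ncard = (G.edgeSet \ ⋃ b ∈ t, W b).ncard + ∑ b ∈ t, (W b).ncard := by
    rw [← Set.ncard_biUnion_finset hWdisj,
      Set.ncard_sdiff_add_ncard_of_subset (Set.iUnion₂_subset fun b _ ↦ Set.sep_subset _ _)]
  have hsum : ∑ b ∈ t, ((W b).ncard + 1) = ∑ b ∈ t, (P b).ncard := by
    rw [Finset.sum_add_distrib, Finset.sum_const, smul_eq_mul, mul_one]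
    omega
  exact (Finset.sum_eq_sum_iff_of_le
    fun b hb ↦ hG.isAcyclic.ncard_edgesWithin_add_one_le (hne b hb)).mp hsum

end SimpleGraph

section Cube

variable {n : ℕ} {R X U : Finset (Fin n)} {i j k : Fin n}

theorem cube_adj_symmDiff_singleton (U : Finset (Fin n)) (j : Fin n) :
    (cube n).Adj U (symmDiff U {j}) := by
  change (symmDiff U (symmDiff U {j})).card = 1
  rw [symmDiff_symmDiff_cancel_left, Finset.card_singleton]

theorem symmDiff_singleton_inter_of_notMem (hi : i ∉ R) (U : Finset (Fin n)) :
    symmDiff U {i} ∩ R = U ∩ R := by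
  ext x
  by_cases hx : x = i <;> simp_all [Finset.mem_symmDiff]

theorem symmDiff_singleton_inter_ne_of_mem (hi : i ∈ R) (U : Finset (Fin n)) :
    symmDiff U {i} ∩ R ≠ U ∩ R := by
  intro h
  have hmem := congrArg (i ∈ ·) h
  simp [Finset.mem_symmDiff, hi] at hmem

theorem forall_mem_edge_inter_eq_iff :
    (∀ v ∈ s(U, symmDiff U {j}), v ∩ R = X) ↔ U ∩ R = X ∧ j ∉ R := by
  simp only [Sym2.mem_iff, forall_eq_or_imp, forall_eq]
  constructor
  · rintro ⟨rfl, hj⟩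
    exact ⟨rfl, fun hjR ↦ symmDiff_singleton_inter_ne_of_mem hjR U hj⟩
  · rintro ⟨rfl, hj⟩
    exact ⟨rfl, symmDiff_singleton_inter_of_notMem hj U⟩

theorem edgeInDir_mk_iff_s14 : edgeInDir k s(U, symmDiff U {j}) ↔ k = j := by
  refine ⟨fun ⟨Y, hY⟩ ↦ ?_, fun h ↦ ⟨U, h ▸ rfl⟩⟩
  -- the symmetric difference of the endpoints of an edge is the singleton of its direction
  have hdiff := congrArg (Sym2.lift ⟨symmDiff, symmDiff_comm⟩) hY
  simpa [symmDiff_symmDiff_cancel_left] using hdiff.symm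

theorem exists_eq_mk_symmDiff_singleton {e : Sym2 (Finset (Fin n))}
    (he : e ∈ (cube n).edgeSet) : ∃ j U, e = s(U, symmDiff U {j}) := by
  induction e using Sym2.ind with
  | h U Y =>
    obtain ⟨j, hj⟩ := Finset.card_eq_one.mp he
    exact ⟨j, U, by rw [← hj, symmDiff_symmDiff_cancel_left]⟩

theorem slideEdge_mk :
    slideEdge i s(U, symmDiff U {j}) = s(symmDiff U {i}, symmDiff (symmDiff U {i}) {j}) := by
  rw [slideEdge, Sym2.map_mk, symmDiff_right_comm]

theorem slideEdge_mk_self : slideEdge j s(U, symmDiff U {j}) = s(U, symmDiff U {j}) := by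
  rw [slideEdge, Sym2.map_mk, symmDiff_symmDiff_cancel_right, Sym2.eq_swap]

theorem ncard_sep_exists_edgeInDir_eq_sum (T : SimpleGraph (Finset (Fin n)))
    (D : Finset (Fin n)) :
    {e ∈ T.edgeSet | ∃ i ∈ D, edgeInDir i e}.ncard = ∑ i ∈ D, dirCount T i := by
  unfold dirCount
  rw [← Set.ncard_biUnion_finset]
  · congr 1
    ext e
    simp only [Set.mem_sep_iff, Set.mem_iUnion, exists_prop]
    grind
  · intro a _ b _ hab
    refine Set.disjoint_left.mpr fun e ⟨_, ha⟩ ⟨_, hb⟩ ↦ hab ?_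
    obtain ⟨U, rfl⟩ := ha
    exact (edgeInDir_mk_iff_s14.mp hb).symm

theorem IsSpanningTreeOf.ncard_edgesWithin_fiber_add_one {T : SimpleGraph (Finset (Fin n))}
    (hT : IsSpanningTreeOf T (cube n)) (hred : ReducesOver (dirCount T) R) (hX : X ⊆ R) :
    (edgesWithin {W | W ∩ R = X} T).ncard + 1 = {W : Finset (Fin n) | W ∩ R = X}.ncard := by
  have hcross : T.edgeSet \ ⋃ Y ∈ R.powerset, edgesWithin {W | W ∩ R = Y} T =
      {e ∈ T.edgeSet | ∃ i ∈ R, edgeInDir i e} := by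
    ext e
    simp only [Set.mem_sdiff, Set.mem_sep_iff, Set.mem_iUnion, exists_prop, Finset.mem_powerset,
      not_exists, not_and]
    refine and_congr_right fun he ↦ ?_
    obtain ⟨j, U, rfl⟩ := exists_eq_mk_symmDiff_singleton (edgeSet_mono hT.1 he)
    simp only [edgesWithin, Set.mem_ofPred_eq, forall_mem_edge_inter_eq_iff, edgeInDir_mk_iff_s14,
      exists_eq_right]
    constructor
    · intro h
      by_contra hj
      exact h (U ∩ R) Finset.inter_subset_right ⟨he, rfl, hj⟩
    · rintro hj Y - ⟨-, -, hj'⟩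
      exact hj' hj
  refine hT.2.ncard_edgesWithin_add_one_eq (t := R.powerset) (P := fun Y ↦ {W | W ∩ R = Y})
    ?_ ?_ ?_ ?_ X (Finset.mem_powerset.mpr hX)
  · intro Y _ Z _ hYZ
    exact Set.disjoint_left.mpr fun W hY hZ ↦ hYZ (hY.symm.trans hZ)
  · exact fun W ↦ ⟨W ∩ R, Finset.mem_powerset.mpr Finset.inter_subset_right, rfl⟩
  · exact fun Y hY ↦ ⟨Y, Finset.inter_eq_left.mpr (Finset.mem_powerset.mp hY)⟩
  · change (T.edgeSet \ ⋃ Y ∈ R.powerset, edgesWithin {W | W ∩ R = Y} T).ncard + 1 = _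
    rw [hcross, ncard_sep_exists_edgeInDir_eq_sum, hred, Finset.card_powerset]
    exact Nat.sub_add_cancel Nat.one_le_two_pow

variable {A B : SimpleGraph (Finset (Fin n))}

theorem SlideStep.eq_or_exchange (h : SlideStep n A B) :
    B = A ∨ ∃ i j U, i ≠ j ∧ s(U, symmDiff U {j}) ∈ A.edgeSet ∧
      s(symmDiff U {i}, symmDiff (symmDiff U {i}) {j}) ∉ A.edgeSet ∧
      B.edgeSet = insert s(symmDiff U {i}, symmDiff (symmDiff U {i}) {j})
        (A.edgeSet \ {s(U, symmDiff U {j})}) := by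
  obtain ⟨hA, hB, i, e, he, rfl⟩ := h
  obtain ⟨j, U, rfl⟩ := exists_eq_mk_symmDiff_singleton (edgeSet_mono hA.1 he)
  obtain rfl | hij := eq_or_ne i j
  · left
    rw [slideEdge_mk_self, Set.sdiff_union_self,
      Set.union_eq_self_of_subset_right (Set.singleton_subset_iff.mpr he), fromEdgeSet_edgeSet]
  right
  rw [slideEdge_mk] at hB ⊢
  set f := s(symmDiff U {i}, symmDiff (symmDiff U {i}) {j})
  have hBE : (fromEdgeSet ((A.edgeSet \ {s(U, symmDiff U {j})}) ∪ {f})).edgeSet =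
      insert f (A.edgeSet \ {s(U, symmDiff U {j})}) := by
    rw [edgeSet_fromEdgeSet, Set.union_singleton, sdiff_eq_left]
    refine Set.disjoint_left.mpr ?_
    rintro g (rfl | ⟨hg, -⟩)
    · exact fun hd ↦ (cube_adj_symmDiff_singleton _ j).ne (Sym2.mk_isDiag_iff.mp hd)
    · exact A.not_isDiag_of_mem_edgeSet hg
  have hfe : f ≠ s(U, symmDiff U {j}) := by
    rw [Ne, Sym2.eq_iff]
    rintro (⟨h, -⟩ | ⟨h, -⟩)
    · exact (cube_adj_symmDiff_singleton U i).ne h.symm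
    · exact hij (Finset.singleton_injective (symmDiff_right_injective U h))
  -- otherwise the slide would lose an edge, but all spanning trees have the same size
  have hf : f ∉ A.edgeSet := by
    intro hfA
    have hAcard := hA.2.ncard_edgeSet_add_one
    have hBcard := hB.2.ncard_edgeSet_add_one
    rw [hBE, Set.insert_eq_of_mem (Set.mem_sdiff_singleton.mpr ⟨hfA, hfe⟩)] at hBcard
    have := Set.ncard_sdiff_singleton_add_one he (Set.toFinite _)
    omega
  exact ⟨i, j, U, hij, he, hf, hBE⟩

theorem SlideStep.dirCount_eq (h : SlideStep n A B) : dirCount B = dirCount A := by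
  funext k
  obtain rfl | ⟨i, j, U, -, he, hf, hBE⟩ := h.eq_or_exchange
  · rfl
  unfold dirCount
  rw [hBE]
  exact Set.ncard_sep_insert_sdiff_of_iff he hf (by rw [edgeInDir_mk_iff_s14, edgeInDir_mk_iff_s14])

theorem SlideStep.dirCountOn_fiber_eq (h : SlideStep n A B) (hred : ReducesOver (dirCount A) R) :
    dirCountOn {W | W ∩ R = X} B k = dirCountOn {W | W ∩ R = X} A k := by
  obtain rfl | ⟨i, j, U, -, he, hf, hBE⟩ := h.eq_or_exchange
  · rfl
  -- an edge cannot slide between fibers, since the fiber it leaves would no longer be spanned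
  have hiR : j ∉ R → i ∉ R := by
    intro hj hi
    have hleave := Set.ncard_sep_insert_sdiff_add_one
      (P := fun g ↦ ∀ v ∈ g, v ∈ {W : Finset (Fin n) | W ∩ R = U ∩ R}) (Set.toFinite _) he
      (forall_mem_edge_inter_eq_iff.mpr ⟨rfl, hj⟩)
      (fun hf' ↦
        symmDiff_singleton_inter_ne_of_mem hi U ((forall_mem_edge_inter_eq_iff (j := j)).mp hf').1)
    rw [← hBE] at hleave
    have hA := h.1.ncard_edgesWithin_fiber_add_one hred (Finset.inter_subset_right (s₁ := U))
    have hB := h.2.1.ncard_edgesWithin_fiber_add_one (h.dirCount_eq ▸ hred)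
      (Finset.inter_subset_right (s₁ := U))
    unfold edgesWithin at hA hB
    omega
  unfold dirCountOn
  rw [hBE]
  refine Set.ncard_sep_insert_sdiff_of_iff he hf ?_
  simp only [edgeInDir_mk_iff_s14, Set.mem_ofPred_eq, forall_mem_edge_inter_eq_iff]
  constructor
  · rintro ⟨rfl, rfl, hj⟩
    exact ⟨rfl, symmDiff_singleton_inter_of_notMem (hiR hj) U, hj⟩
  · rintro ⟨rfl, hU, hj⟩
    exact ⟨rfl, (symmDiff_singleton_inter_of_notMem (hiR hj) U).symm.trans hU, hj⟩

theorem dirCount_eq_of_reflTransGen {T T' : SimpleGraph (Finset (Fin n))}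
    (h : Relation.ReflTransGen (SlideStep n) T T') : dirCount T' = dirCount T := by
  induction h with
  | refl => rfl
  | tail _ hstep ih => rw [hstep.dirCount_eq, ih]

end Cube

theorem stmt14_general (n : ℕ) (R : Finset (Fin n))
    (T T' : SimpleGraph (Finset (Fin n)))
    (hred : ReducesOver (fun i => dirCount T i) R)
    (hslides : Relation.ReflTransGen (SlideStep n) T T') :
    ∀ X ⊆ R, ∀ i, i ∉ R →
      dirCountOn {W : Finset (Fin n) | W ∩ R = X} T' i =
        dirCountOn {W : Finset (Fin n) | W ∩ R = X} T i := by
  intro X _ i _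
  induction hslides with
  | refl => rfl
  | @tail A B hTA hAB ih =>
    have hredA : ReducesOver (dirCount A) R := by rwa [dirCount_eq_of_reflTransGen hTA]
    rw [hAB.dirCountOn_fiber_eq hredA, ih]

/-- Corollary: subcube signatures are slide invariants. If the
spanning tree `T` of `Q_n` reduces over `R` and `T'` is obtained from `T` by a finite
sequence of edge slides, then for all `X ⊆ R` and all directions `i ∉ R` the number of
edges of `T'(R,X)` in direction `i` equals that of `T(R,X)`. -/
theorem stmt14 (n : ℕ) (R : Finset (Fin n)) (hR1 : R.Nonempty) (hR2 : R ≠ Finset.univ)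
    (T T' : SimpleGraph (Finset (Fin n))) (hT : IsSpanningTreeOf T (cube n))
    (hred : ReducesOver (fun i => dirCount T i) R)
    (hslides : Relation.ReflTransGen (SlideStep n) T T') :
    ∀ X ⊆ R, ∀ i, i ∉ R →
      dirCountOn {W : Finset (Fin n) | W ∩ R = X} T' i =
        dirCountOn {W : Finset (Fin n) | W ∩ R = X} T i :=
  stmt14_general n R T T' hred hslides
end
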